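/- arXiv:0810.1007 — 2 statements merged into one kernel-verified Lean document; each statement's English description precedes it below -/
import Mathlib

section
/- Let n ≥ 1 and let J : {1,…,n} × {1,…,n} → ℝ satisfy J_{ij} ≥ 0 for all 1 ≤ i,j ≤ n. Define Z(h₁,…,hₙ) = Σ_{σ ∈ {-1,1}ⁿ} exp(Σ_{i,j=1}^n J_{ij} σ_i σ_j) · exp(Σ_{i=1}^n σ_i h_i). Then every zero of the entire function h ↦ Z(h,h,…,h) of one complex variable lies on the imaginary axis, i.e., if Z(h,…,h) = 0 then Re(h) = 0. -/
/-!
With `S` the set of up-spins, `Z(h)` is a nonvanishing factor times the multiaffine polynomial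
`∑_S w(S) u^S` at `u_i = e^{2h}`, where `w(S) = ∏ e^{-2 J i j}` over the ordered pairs `(i, j)`
separated by `S`. By the Lee–Yang circle theorem this polynomial has no zeros in the open unit
polydisc, so `Z(h) ≠ 0` when `Re h < 0`; the spin-flip symmetry `Z(-h) = Z(h)` covers `Re h > 0`.

The circle theorem is proved as by Asano and Ruelle. Multiplying the coefficients by an edge
weight `a ∈ [-1, 1]` on a pair `{i, j}` is, with the other variables frozen, the Hadamard product
with `1 + a s + a t + s t`, which has no zeros in the bidisc. Hadamard products preserve
zero-freeness on the bidisc by two applications of Asano's contraction: if `a + b s + c t + d s t`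
has no zeros in the bidisc then `a + d u` has none in the disc. Since the open polydisc contains
`0`, the contraction needs no nondegeneracy hypothesis.
-/

open Finset

def BidiscZeroFree (b₀₀ b₁₀ b₀₁ b₁₁ : ℂ) : Prop :=
  ∀ s t : ℂ, ‖s‖ < 1 → ‖t‖ < 1 → b₀₀ + b₁₀ * s + b₀₁ * t + b₁₁ * (s * t) ≠ 0

namespace BidiscZeroFree

variable {a b c d : ℂ}

theorem asano (h : BidiscZeroFree a b c d) {u : ℂ} (hu : ‖u‖ < 1) : a + d * u ≠ 0 := by
  -- on the diagonal `s = t` we get a quadratic whose roots multiply to `-u`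
  intro hzero
  have ha : a ≠ 0 := by simpa using h 0 0 (by simp) (by simp)
  have hd : d ≠ 0 := by rintro rfl; simp_all
  obtain ⟨r, hr⟩ := IsAlgClosed.exists_eq_mul_self ((b + c) ^ 2 - 4 * d * a)
  set t₁ := (-(b + c) + r) / (2 * d)
  set t₂ := (-(b + c) - r) / (2 * d)
  have hroots : ∀ t, a + b * t + c * t + d * (t * t) = d * ((t - t₁) * (t - t₂)) := by
    intro t
    simp only [t₁, t₂]
    field_simp
    linear_combination (-1 : ℂ) * hr
  have hprod : t₁ * t₂ = -u := by
    simp only [t₁, t₂]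
    field_simp
    linear_combination hr + 4 * d * hzero
  have hsmall : ‖t₁‖ < 1 ∨ ‖t₂‖ < 1 := by
    by_contra! hbig
    have : ‖t₁ * t₂‖ < 1 := by rwa [hprod, norm_neg]
    rw [norm_mul] at this
    nlinarith [hbig.1, hbig.2]
  rcases hsmall with h₁ | h₂
  · exact h t₁ t₁ h₁ h₁ (by rw [hroots]; ring)
  · exact h t₂ t₂ h₂ h₂ (by rw [hroots]; ring)

theorem mul {b₀₀ b₁₀ b₀₁ b₁₁ e₀₀ e₁₀ e₀₁ e₁₁ : ℂ} (hb : BidiscZeroFree b₀₀ b₁₀ b₀₁ b₁₁)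
    (he : BidiscZeroFree e₀₀ e₁₀ e₀₁ e₁₁) :
    BidiscZeroFree (b₀₀ * e₀₀) (b₁₀ * e₁₀) (b₀₁ * e₀₁) (b₁₁ * e₁₁) := by
  -- contract `b(s₁, t₁) e(s₂, t₂)` first along `s₁ = s₂`, then along `t₁ = t₂`
  intro s t hs ht
  have hcontract : ∀ t₁ t₂ : ℂ, ‖t₁‖ < 1 → ‖t₂‖ < 1 →
      (b₀₀ + b₀₁ * t₁) * (e₀₀ + e₀₁ * t₂) + (b₁₀ + b₁₁ * t₁) * (e₁₀ + e₁₁ * t₂) * s ≠ 0 :=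
    fun t₁ t₂ ht₁ ht₂ => asano (a := (b₀₀ + b₀₁ * t₁) * (e₀₀ + e₀₁ * t₂))
      (b := (b₁₀ + b₁₁ * t₁) * (e₀₀ + e₀₁ * t₂)) (c := (b₀₀ + b₀₁ * t₁) * (e₁₀ + e₁₁ * t₂))
      (d := (b₁₀ + b₁₁ * t₁) * (e₁₀ + e₁₁ * t₂)) (fun s₁ s₂ hs₁ hs₂ => by
        convert mul_ne_zero (hb s₁ t₁ hs₁ ht₁) (he s₂ t₂ hs₂ ht₂) using 1; ring) hs
  convert asano (a := b₀₀ * e₀₀ + b₁₀ * e₁₀ * s) (b := b₀₁ * e₀₀ + b₁₁ * e₁₀ * s)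
    (c := b₀₀ * e₀₁ + b₁₀ * e₁₁ * s) (d := b₀₁ * e₀₁ + b₁₁ * e₁₁ * s) (fun t₁ t₂ ht₁ ht₂ => by
      convert hcontract t₁ t₂ ht₁ ht₂ using 1; ring) ht using 1
  ring

end BidiscZeroFree

theorem bidiscZeroFree_edge {a : ℝ} (ha : |a| ≤ 1) : BidiscZeroFree 1 a a 1 := by
  intro s t hs ht hzero
  by_cases hsa : (a : ℂ) + s = 0
  · have hs' : s = -a := by linear_combination hsa
    have hnorm : ‖s‖ = |a| := by rw [hs', norm_neg, Complex.norm_real, Real.norm_eq_abs]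
    have ha2 : a ^ 2 = 1 := by
      rw [hs'] at hzero
      exact_mod_cast (by linear_combination -hzero : (a : ℂ) ^ 2 = 1)
    nlinarith [sq_abs a, abs_nonneg a]
  · have hle : ‖(a : ℂ) + s‖ ≤ ‖1 + a * s‖ := by
      refine (pow_le_pow_iff_left₀ (norm_nonneg _) (norm_nonneg _) two_ne_zero).mp ?_
      have hexpand : ‖1 + a * s‖ ^ 2 = ‖(a : ℂ) + s‖ ^ 2 + (1 - a ^ 2) * (1 - ‖s‖ ^ 2) := by
        simp only [Complex.sq_norm, Complex.normSq_apply, Complex.add_re, Complex.add_im,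
          Complex.mul_re, Complex.mul_im, Complex.ofReal_re, Complex.ofReal_im, Complex.one_re,
          Complex.one_im]
        ring
      have ha' : 0 ≤ 1 - a ^ 2 := by nlinarith [sq_abs a, abs_nonneg a]
      have hs' : 0 ≤ 1 - ‖s‖ ^ 2 := by nlinarith [norm_nonneg s]
      nlinarith [mul_nonneg ha' hs']
    have hfactor : ‖t‖ * ‖(a : ℂ) + s‖ = ‖1 + a * s‖ := by
      rw [← norm_mul, show t * (a + s) = -(1 + a * s) by linear_combination hzero, norm_neg]
    nlinarith [mul_pos (sub_pos.mpr ht) (norm_pos_iff.mpr hsa)]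

section Multiaffine

variable {ι : Type*} [Fintype ι]

noncomputable def multiaffineEval (c : Finset ι → ℂ) (u : ι → ℂ) : ℂ :=
  ∑ S, c S * ∏ i ∈ S, u i

def PolydiscZeroFree (c : Finset ι → ℂ) : Prop :=
  ∀ u : ι → ℂ, (∀ i, ‖u i‖ < 1) → multiaffineEval c u ≠ 0

theorem polydiscZeroFree_one : PolydiscZeroFree (fun _ : Finset ι => (1 : ℂ)) := by
  intro u hu
  have hprod : multiaffineEval (fun _ => 1) u = ∏ i, (1 + u i) := by
    simp [multiaffineEval, prod_one_add, powerset_univ]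
  rw [hprod, prod_ne_zero_iff]
  intro i _ hi
  have : u i = -1 := by linear_combination hi
  simpa [this] using hu i

variable [DecidableEq ι]

noncomputable def partialCoeff (c : Finset ι → ℂ) (P Q : Finset ι) (u : ι → ℂ) : ℂ :=
  ∑ S with S ∩ P = Q, c S * ∏ k ∈ S \ P, u k

theorem partialCoeff_congr {c : Finset ι → ℂ} {P : Finset ι} (Q : Finset ι) {u v : ι → ℂ}
    (h : ∀ k ∉ P, u k = v k) : partialCoeff c P Q u = partialCoeff c P Q v :=
  sum_congr rfl fun _ _ => congrArg _ <| prod_congr rfl fun k hk => h k (mem_sdiff.mp hk).2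

theorem multiaffineEval_eq_sum_powerset (e c : Finset ι → ℂ) (P : Finset ι) (u : ι → ℂ) :
    multiaffineEval (fun S => e (S ∩ P) * c S) u =
      ∑ Q ∈ P.powerset, e Q * partialCoeff c P Q u * ∏ k ∈ Q, u k := by
  unfold multiaffineEval partialCoeff
  rw [← sum_fiberwise_of_maps_to (g := (· ∩ P)) (t := P.powerset)
    (fun S _ => mem_powerset.mpr inter_subset_right)]
  refine sum_congr rfl fun Q _ => ?_
  rw [mul_sum, sum_mul]
  refine sum_congr rfl fun S hS => ?_
  rw [(mem_filter.mp hS).2.symm, ← prod_inter_mul_prod_sdiff S P]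
  ring

theorem multiaffineEval_pair {i j : ι} (hij : i ≠ j) (e c : Finset ι → ℂ) (u : ι → ℂ) :
    multiaffineEval (fun S => e (S ∩ {i, j}) * c S) u =
      e ∅ * partialCoeff c {i, j} ∅ u + e {i} * partialCoeff c {i, j} {i} u * u i +
        e {j} * partialCoeff c {i, j} {j} u * u j +
          e {i, j} * partialCoeff c {i, j} {i, j} u * (u i * u j) := by
  have hsingleton : ({j} : Finset ι).powerset = {∅, {j}} := by
    ext Q; simp [subset_singleton_iff]
  rw [multiaffineEval_eq_sum_powerset, sum_powerset_insert (by simpa using hij), hsingleton,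
    sum_pair (by simp), sum_pair (by simp)]
  simp only [prod_empty, prod_singleton, insert_empty_eq, prod_pair hij]
  ring

theorem PolydiscZeroFree.bidiscZeroFree {c : Finset ι → ℂ} (hc : PolydiscZeroFree c) {i j : ι}
    (hij : i ≠ j) {u : ι → ℂ} (hu : ∀ k, ‖u k‖ < 1) :
    BidiscZeroFree (partialCoeff c {i, j} ∅ u) (partialCoeff c {i, j} {i} u)
      (partialCoeff c {i, j} {j} u) (partialCoeff c {i, j} {i, j} u) := by
  intro s t hs ht
  set v := Function.update (Function.update u i s) j t
  have hvu : ∀ k ∉ ({i, j} : Finset ι), v k = u k := by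
    intro k hk
    simp only [mem_insert, mem_singleton, not_or] at hk
    simp [v, hk.1, hk.2]
  have hv : ∀ k, ‖v k‖ < 1 := by
    intro k
    by_cases hkj : k = j
    · simpa [v, hkj] using ht
    by_cases hki : k = i
    · simpa [v, hki, hij] using hs
    simpa [v, hkj, hki] using hu k
  have := hc v hv
  rw [show c = fun S => (fun _ => (1 : ℂ)) (S ∩ {i, j}) * c S by simp,
    multiaffineEval_pair hij (fun _ => 1)] at this
  simpa [partialCoeff_congr _ hvu, v, hij, hij.symm] using this

noncomputable def edgeFactor (a : ℝ) (i j : ι) (S : Finset ι) : ℂ :=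
  if (i ∈ S ↔ j ∈ S) then 1 else a

theorem PolydiscZeroFree.edgeFactor_mul {c : Finset ι → ℂ} (hc : PolydiscZeroFree c) {a : ℝ}
    (ha : |a| ≤ 1) (i j : ι) : PolydiscZeroFree (fun S => edgeFactor a i j S * c S) := by
  by_cases hij : i = j
  · simpa [edgeFactor, hij] using hc
  intro u hu
  have hpair : (fun S => edgeFactor a i j S * c S) =
      fun S => edgeFactor a i j (S ∩ {i, j}) * c S := by
    ext S; simp [edgeFactor]
  rw [hpair, multiaffineEval_pair hij]
  convert (hc.bidiscZeroFree hij hu).mul (bidiscZeroFree_edge ha) (u i) (u j) (hu i) (hu j)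
    using 1
  simp [edgeFactor, hij, Ne.symm hij]
  ring

theorem polydiscZeroFree_prod_edgeFactor (F : Finset (ι × ι)) (a : ι × ι → ℝ)
    (ha : ∀ p ∈ F, |a p| ≤ 1) :
    PolydiscZeroFree (fun S => ∏ p ∈ F, edgeFactor (a p) p.1 p.2 S) := by
  induction F using Finset.induction_on with
  | empty => simpa using polydiscZeroFree_one
  | insert p F hp ih =>
    simp_rw [prod_insert hp]
    exact (ih fun q hq => ha q (mem_insert_of_mem hq)).edgeFactor_mul
      (ha p (mem_insert_self p F)) p.1 p.2

end Multiaffine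

section Ising

variable {ι : Type*} [Fintype ι]

noncomputable def spinTerm (J : ι → ι → ℝ) (h : ℂ) (σ : ι → ℤ) : ℂ :=
  Complex.exp ((∑ i, ∑ j, J i j * (σ i : ℝ) * (σ j : ℝ) : ℝ)) *
    Complex.exp (∑ i, (σ i : ℂ) * h)

theorem spinTerm_neg (J : ι → ι → ℝ) (h : ℂ) (σ : ι → ℤ) :
    spinTerm J h (-σ) = spinTerm J (-h) σ := by
  simp [spinTerm]

variable [DecidableEq ι]

noncomputable def isingWeight (J : ι → ι → ℝ) (S : Finset ι) : ℂ :=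
  ∏ p : ι × ι, edgeFactor (Real.exp (-2 * J p.1 p.2)) p.1 p.2 S

theorem polydiscZeroFree_isingWeight {J : ι → ι → ℝ} (hJ : ∀ i j, 0 ≤ J i j) :
    PolydiscZeroFree (isingWeight J) :=
  polydiscZeroFree_prod_edgeFactor univ _ fun p _ => by
    rw [abs_of_pos (Real.exp_pos _), Real.exp_le_one_iff]
    linarith [hJ p.1 p.2]

def spin (S : Finset ι) (i : ι) : ℤ := if i ∈ S then 1 else -1

theorem spin_compl (S : Finset ι) : spin Sᶜ = -spin S := by
  ext i; by_cases hi : i ∈ S <;> simp [spin, hi]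

theorem exp_coupling_spin (J : ι → ι → ℝ) (S : Finset ι) :
    Complex.exp ((∑ i, ∑ j, J i j * (spin S i : ℝ) * (spin S j : ℝ) : ℝ)) =
      Complex.exp (∑ i, ∑ j, J i j : ℝ) * isingWeight J S := by
  simp only [isingWeight, Fintype.prod_prod_type, Complex.ofReal_sum, Complex.exp_sum,
    ← prod_mul_distrib]
  refine prod_congr rfl fun i _ => prod_congr rfl fun j _ => ?_
  by_cases hi : i ∈ S <;> by_cases hj : j ∈ S <;>
    simp [spin, edgeFactor, hi, hj, Complex.ofReal_exp, ← Complex.exp_add] <;> ring_nf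

theorem exp_field_spin (S : Finset ι) (h : ℂ) :
    Complex.exp (∑ i, (spin S i : ℂ) * h) =
      Complex.exp (-(Fintype.card ι) * h) * ∏ _i ∈ S, Complex.exp (2 * h) := by
  have hsum : ∑ i, (spin S i : ℂ) * h = -(Fintype.card ι) * h + ∑ _i ∈ S, 2 * h := by
    calc ∑ i, (spin S i : ℂ) * h = ∑ i, (-h + if i ∈ S then 2 * h else 0) :=
          sum_congr rfl fun i _ => by by_cases hi : i ∈ S <;> simp [spin, hi]; ring
      _ = -(Fintype.card ι) * h + ∑ _i ∈ S, 2 * h := by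
          rw [sum_add_distrib, sum_ite_mem, univ_inter]
          simp
  rw [hsum, Complex.exp_add, Complex.exp_sum]

def spinConfig (S : Finset ι) (i : ι) : ({-1, 1} : Finset ℤ) :=
  ⟨spin S i, by by_cases hi : i ∈ S <;> simp [spin, hi]⟩

theorem spinConfig_bijective : Function.Bijective (spinConfig (ι := ι)) := by
  refine ⟨fun S T hST => ?_,
    fun σ => ⟨univ.filter fun i => (σ i : ℤ) = 1, funext fun i => Subtype.ext ?_⟩⟩
  · ext i
    have := congrArg Subtype.val (congrFun hST i)
    by_cases hS : i ∈ S <;> by_cases hT : i ∈ T <;> simp_all [spinConfig, spin]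
  · rcases mem_insert.mp (σ i).2 with hσ | hσ <;> simp_all [spinConfig, spin]

noncomputable def partitionFunction (J : ι → ι → ℝ) (h : ℂ) : ℂ :=
  ∑ σ : ι → ({-1, 1} : Finset ℤ), spinTerm J h (fun i => σ i)

theorem partitionFunction_eq_sum_spin (J : ι → ι → ℝ) (h : ℂ) :
    partitionFunction J h = ∑ S, spinTerm J h (spin S) :=
  (Fintype.sum_bijective _ spinConfig_bijective _ _ fun _ => rfl).symm

theorem partitionFunction_neg (J : ι → ι → ℝ) (h : ℂ) :
    partitionFunction J (-h) = partitionFunction J h := by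
  simp only [partitionFunction_eq_sum_spin, ← spinTerm_neg]
  exact Fintype.sum_bijective _ compl_involutive.bijective _ _ fun S => by rw [spin_compl]

theorem partitionFunction_eq_multiaffineEval (J : ι → ι → ℝ) (h : ℂ) :
    partitionFunction J h = Complex.exp (∑ i, ∑ j, J i j : ℝ) *
      Complex.exp (-(Fintype.card ι) * h) *
        multiaffineEval (isingWeight J) (fun _ => Complex.exp (2 * h)) := by
  rw [partitionFunction_eq_sum_spin, multiaffineEval, mul_sum]
  refine sum_congr rfl fun S _ => ?_
  rw [spinTerm, exp_coupling_spin, exp_field_spin]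
  ring

theorem partitionFunction_ne_zero_of_re_neg {J : ι → ι → ℝ} (hJ : ∀ i j, 0 ≤ J i j) {h : ℂ}
    (hh : h.re < 0) : partitionFunction J h ≠ 0 := by
  rw [partitionFunction_eq_multiaffineEval]
  refine mul_ne_zero (mul_ne_zero (Complex.exp_ne_zero _) (Complex.exp_ne_zero _))
    (polydiscZeroFree_isingWeight hJ _ fun _ => ?_)
  rw [Complex.norm_exp, Real.exp_lt_one_iff]
  simpa using mul_neg_of_pos_of_neg two_pos hh

end Ising

theorem lee_yang_b_general (n : ℕ) (J : Fin n → Fin n → ℝ)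
    (hJ : ∀ i j, 0 ≤ J i j) (h : ℂ)
    (hZ : ∑ σ : Fin n → ({-1, 1} : Finset ℤ),
      Complex.exp ((∑ i, ∑ j, J i j * ((σ i : ℤ) : ℝ) * ((σ j : ℤ) : ℝ) : ℝ)) *
        Complex.exp (∑ i, ((σ i : ℤ) : ℂ) * h) = 0) :
    h.re = 0 := by
  have hZ' : partitionFunction J h = 0 := hZ
  by_contra hre
  rcases lt_or_gt_of_ne hre with hneg | hpos
  · exact partitionFunction_ne_zero_of_re_neg hJ hneg hZ'
  · refine partitionFunction_ne_zero_of_re_neg hJ (h := -h) (by simpa using hpos) ?_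
    rwa [partitionFunction_neg]

/-- **Lee–Yang theorem, part (b).** If all coupling constants `J i j` are non-negative,
then every zero of the one-variable partition function
`h ↦ Z(h,…,h) = ∑_{σ ∈ {-1,1}ⁿ} exp(∑_{i,j} J i j σ_i σ_j) · exp(∑_i σ_i h)`
lies on the imaginary axis. -/
theorem lee_yang_b (n : ℕ) (hn : 1 ≤ n) (J : Fin n → Fin n → ℝ)
    (hJ : ∀ i j, 0 ≤ J i j) (h : ℂ)
    (hZ : ∑ σ : Fin n → ({-1, 1} : Finset ℤ),
      Complex.exp ((∑ i, ∑ j, J i j * ((σ i : ℤ) : ℝ) * ((σ j : ℤ) : ℝ) : ℝ)) *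
        Complex.exp (∑ i, ((σ i : ℤ) : ℂ) * h) = 0) :
    h.re = 0 :=
  lee_yang_b_general n J hJ h hZ
end

section
/- Let MAP : ℂ[z₁,…,zₙ] → ℂ[z₁,…,zₙ] be the linear operator extracting the multi-affine part of a polynomial: if f(z) = Σ_{α∈ℕⁿ} a(α) z^α then MAP(f)(z) = Σ_{α : α_i ≤ 1 for all i} a(α) z^α. If f is ℍ_{π/2}-stable, then MAP(f) is either ℍ_{π/2}-stable or identically zero. -/
/-!
`MAP` is the composite of the truncations `affinePart i` to degree at most one in a single
variable, so it suffices to show that each of them preserves stability (or gives `0`).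
Write `f = f₀ + zᵢ f₁ + zᵢ² (⋯)` with `f₀, f₁` free of `zᵢ`. Letting `zᵢ → 0` inside the
half-plane, Hurwitz's theorem shows that `f₀ = f(zᵢ := 0)` is either identically zero or
stable.
If it is stable, freeze the other variables: the roots `r` of `p(w) = f(…, w, …)` lie in
`Re r ≤ 0`, so `p'(0) / p(0) = -∑ 1 / r` has nonnegative real part and
`p(0) + p'(0) zᵢ = p(0) (1 + zᵢ p'(0) / p(0))` cannot vanish when `Re zᵢ > 0`.
If `f₀ = 0`, then `f = zᵢ g` with `g` stable, and the same dichotomy for `g(zᵢ := 0) = f₁`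
concludes.
-/

open MvPolynomial

/-- The linear operator extracting the multi-affine part of a polynomial:
if `f = ∑_α a(α) z^α` then `MAP f = ∑_{α : α_i ≤ 1 ∀ i} a(α) z^α`. -/
noncomputable def MAP {n : ℕ} (f : MvPolynomial (Fin n) ℂ) : MvPolynomial (Fin n) ℂ :=
  ∑ α ∈ f.support.filter (fun α : Fin n →₀ ℕ => ∀ i, α i ≤ 1),
    monomial α (f.coeff α)

open Metric Set

namespace Polynomial

theorem re_coeff_one_div_coeff_zero_nonneg_of_prod (M : Multiset ℂ)
    (hM : ∀ r ∈ M, r.re ≤ 0) :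
    0 ≤ ((M.map fun r => X - C r).prod.coeff 1 / (M.map fun r => X - C r).prod.coeff 0).re := by
  induction M using Multiset.induction_on with
  | empty => simp [coeff_one]
  | cons r M ih =>
    have hr := hM r (Multiset.mem_cons_self r M)
    have ih := ih fun s hs => hM s (Multiset.mem_cons_of_mem hs)
    set Q := (M.map fun r => X - C r).prod
    have h0 : ((X - C r) * Q).coeff 0 = -r * Q.coeff 0 := by simp [sub_mul]
    have h1 : ((X - C r) * Q).coeff 1 = Q.coeff 0 - r * Q.coeff 1 := by
      simp [sub_mul, coeff_X_mul, coeff_C_mul]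
    rw [Multiset.map_cons, Multiset.prod_cons, h0, h1]
    -- a vanishing constant coefficient makes the quotient `x / 0 = 0`
    obtain rfl | hr0 := eq_or_ne r 0
    · simp
    obtain hQ | hQ := eq_or_ne (Q.coeff 0) 0
    · simp [hQ]
    have key : (Q.coeff 0 - r * Q.coeff 1) / (-r * Q.coeff 0) =
        -r⁻¹ + Q.coeff 1 / Q.coeff 0 := by
      field_simp
      ring
    have hinv : 0 ≤ (-r⁻¹).re := by
      rw [Complex.neg_re, Complex.inv_re, neg_nonneg]
      exact div_nonpos_of_nonpos_of_nonneg hr (Complex.normSq_nonneg r)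
    rw [key, Complex.add_re]
    exact add_nonneg hinv ih

theorem coeff_zero_add_coeff_one_mul_ne_zero {p : ℂ[X]}
    (hp : ∀ w : ℂ, 0 < w.re → p.eval w ≠ 0) (h0 : p.coeff 0 ≠ 0) {w : ℂ} (hw : 0 < w.re) :
    p.coeff 0 + p.coeff 1 * w ≠ 0 := by
  have hp0 : p ≠ 0 := fun h => h0 (by simp [h])
  have hroots : ∀ r ∈ p.roots, r.re ≤ 0 := fun r hr => by
    by_contra! hre
    exact hp r hre ((mem_roots hp0).mp hr)
  have hratio : 0 ≤ (p.coeff 1 / p.coeff 0).re := by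
    rw [(IsAlgClosed.splits p).eq_prod_roots, coeff_C_mul, coeff_C_mul,
      mul_div_mul_left _ _ (leadingCoeff_ne_zero.mpr hp0)]
    exact re_coeff_one_div_coeff_zero_nonneg_of_prod _ hroots
  intro h
  have hw0 : w ≠ 0 := fun h => by simp [h] at hw
  have : p.coeff 1 / p.coeff 0 = -w⁻¹ := by
    field_simp
    linear_combination h
  rw [this, Complex.neg_re, Complex.inv_re] at hratio
  have : 0 < w.re / Complex.normSq w := div_pos hw (Complex.normSq_pos.mpr hw0)
  linarith

theorem exists_sphere_eval_ne_zero {p : Polynomial ℂ} (hp : p ≠ 0) {r₀ : ℝ}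
    (hr₀ : 0 < r₀) : ∃ r ∈ Ioo 0 r₀, ∀ t ∈ sphere (0 : ℂ) r, p.eval t ≠ 0 := by
  obtain ⟨r, hr, hnot⟩ :=
    (Ioo_infinite hr₀).exists_notMem_finset (p.roots.toFinset.image (‖·‖))
  refine ⟨r, hr, fun t ht hroot => hnot ?_⟩
  rw [mem_sphere_zero_iff_norm] at ht
  exact Finset.mem_image.mpr ⟨t, Multiset.mem_toFinset.mpr ((mem_roots hp).mpr hroot), ht⟩

end Polynomial

theorem ne_zero_of_ne_zero_on_closedBall_of_ne_zero_on_sphere {Ψ : ℝ → ℂ → ℂ}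
    (hΨ : Continuous (Function.uncurry Ψ)) (hdiff : ∀ ε, Differentiable ℂ (Ψ ε))
    {r : ℝ} (hr : 0 < r) (hpos : ∀ ε > 0, ∀ t ∈ closedBall (0 : ℂ) r, Ψ ε t ≠ 0)
    (hsphere : ∀ t ∈ sphere (0 : ℂ) r, Ψ 0 t ≠ 0) : Ψ 0 0 ≠ 0 := by
  have hK : (Icc (0 : ℝ) 1 ×ˢ sphere (0 : ℂ) r).Nonempty :=
    ⟨(0, r), left_mem_Icc.mpr zero_le_one, by simp [abs_of_pos hr]⟩
  obtain ⟨⟨ε₀, t₀⟩, ⟨hε₀, ht₀⟩, hmin⟩ :=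
    (isCompact_Icc.prod (isCompact_sphere 0 r)).exists_isMinOn hK hΨ.norm.continuousOn
  set m := ‖Ψ ε₀ t₀‖
  have hm : 0 < m := by
    refine norm_pos_iff.mpr ?_
    rcases hε₀.1.eq_or_lt with rfl | hε₀
    · exact hsphere t₀ ht₀
    · exact hpos ε₀ hε₀ t₀ (sphere_subset_closedBall ht₀)
  -- minimum modulus principle, i.e. maximum modulus for `(Ψ ε)⁻¹`
  have hbound : ∀ ε ∈ Ioc (0 : ℝ) 1, m ≤ ‖Ψ ε 0‖ := by
    intro ε hε
    have hne : ∀ t ∈ closure (ball (0 : ℂ) r), Ψ ε t ≠ 0 := by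
      rw [closure_ball 0 hr.ne']
      exact hpos ε hε.1
    have hd : DiffContOnCl ℂ (fun t => (Ψ ε t)⁻¹) (ball 0 r) :=
      ((hdiff ε).differentiableOn.inv hne).diffContOnCl
    have hfr : ∀ t ∈ frontier (ball (0 : ℂ) r), ‖(Ψ ε t)⁻¹‖ ≤ m⁻¹ := by
      intro t ht
      rw [frontier_ball 0 hr.ne'] at ht
      rw [norm_inv]
      exact inv_anti₀ hm (hmin (show (ε, t) ∈ _ from ⟨Ioc_subset_Icc_self hε, ht⟩))
    have h := Complex.norm_le_of_forall_mem_frontier_norm_le isBounded_ball hd hfr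
      (subset_closure (mem_ball_self hr))
    rw [norm_inv] at h
    exact (inv_le_inv₀ (norm_pos_iff.mpr (hne 0 (subset_closure (mem_ball_self hr)))) hm).mp h
  have hclosed : IsClosed {ε : ℝ | m ≤ ‖Ψ ε 0‖} :=
    isClosed_le continuous_const (hΨ.comp (continuous_id.prodMk continuous_const)).norm
  have h0 : (0 : ℝ) ∈ closure (Ioc 0 1) := by simp [closure_Ioc zero_ne_one]
  exact norm_pos_iff.mp (hm.trans_le (hclosed.closure_subset_iff.mpr hbound h0))

namespace MvPolynomial

section AffinePart

variable {σ R : Type*} [CommSemiring R]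

theorem coeff_sum_monomial_filter (p : (σ →₀ ℕ) → Prop) [DecidablePred p]
    (f : MvPolynomial σ R) (β : σ →₀ ℕ) :
    coeff β (∑ α ∈ f.support with p α, monomial α (coeff α f)) =
      if p β then coeff β f else 0 := by
  classical
  by_cases hβ : coeff β f = 0 <;> simp [coeff_sum, coeff_monomial, hβ]

noncomputable def affinePart (i : σ) (f : MvPolynomial σ R) : MvPolynomial σ R :=
  ∑ α ∈ f.support with α i ≤ 1, monomial α (coeff α f)

theorem coeff_affinePart (i : σ) (f : MvPolynomial σ R) (β : σ →₀ ℕ) :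
    coeff β (affinePart i f) = if β i ≤ 1 then coeff β f else 0 :=
  coeff_sum_monomial_filter _ f β

theorem affinePart_add (i : σ) (f g : MvPolynomial σ R) :
    affinePart i (f + g) = affinePart i f + affinePart i g := by
  ext β
  simp only [coeff_add, coeff_affinePart]
  split_ifs <;> simp

theorem affinePart_monomial (i : σ) (α : σ →₀ ℕ) (c : R) :
    affinePart i (monomial α c) = if α i ≤ 1 then monomial α c else 0 := by
  classical
  ext β
  rw [coeff_affinePart]
  obtain rfl | hαβ := eq_or_ne α β
  · split_ifs <;> simp
  · split_ifs <;> simp [coeff_monomial, hαβ]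

theorem affinePart_zero (i : σ) : affinePart i (0 : MvPolynomial σ R) = 0 := by
  simp [affinePart]

theorem coeff_foldr_affinePart (l : List σ) (f : MvPolynomial σ R) (β : σ →₀ ℕ) :
    coeff β (l.foldr affinePart f) = if ∀ j ∈ l, β j ≤ 1 then coeff β f else 0 := by
  induction l with
  | nil => simp
  | cons i l ih =>
    rw [List.foldr_cons, coeff_affinePart, ih]
    by_cases hi : β i ≤ 1 <;> simp [hi]

end AffinePart

section Restriction

variable {σ : Type*}

noncomputable def restrictLine (a b : σ → ℂ) : MvPolynomial σ ℂ →ₐ[ℂ] Polynomial ℂ :=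
  aeval fun j => Polynomial.C (a j) + Polynomial.C (b j) * Polynomial.X

theorem eval_restrictLine (a b : σ → ℂ) (f : MvPolynomial σ ℂ) (t : ℂ) :
    (restrictLine a b f).eval t = eval (a + t • b) f := by
  induction f using MvPolynomial.induction_on with
  | C => simp [restrictLine]
  | add => simp_all
  | mul_X f j hf => simp_all [restrictLine, mul_comm t]

variable [DecidableEq σ]

theorem restrictLine_X (z : σ → ℂ) (i : σ) :
    restrictLine (Function.update z i 0) (Pi.single i 1) (X i) = Polynomial.X := by
  simp [restrictLine]

theorem eval_restrictLine_update (z : σ → ℂ) (i : σ) (f : MvPolynomial σ ℂ) (w : ℂ) :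
    (restrictLine (Function.update z i 0) (Pi.single i 1) f).eval w =
      eval (Function.update z i w) f := by
  rw [eval_restrictLine]
  congr 2
  funext j
  obtain rfl | hj := eq_or_ne j i <;> simp [*]

noncomputable def substZero (i : σ) : MvPolynomial σ ℂ →ₐ[ℂ] MvPolynomial σ ℂ :=
  aeval (Function.update X i 0)

theorem eval_substZero (z : σ → ℂ) (i : σ) (f : MvPolynomial σ ℂ) :
    eval z (substZero i f) = eval (Function.update z i 0) f := by
  induction f using MvPolynomial.induction_on with
  | C => simp [substZero]
  | add => simp_all
  | mul_X f j hf => obtain rfl | hj := eq_or_ne j i <;> simp_all [substZero]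

theorem coeff_zero_restrictLine_update (z : σ → ℂ) (i : σ) (f : MvPolynomial σ ℂ) :
    (restrictLine (Function.update z i 0) (Pi.single i 1) f).coeff 0 =
      eval z (substZero i f) := by
  rw [Polynomial.coeff_zero_eq_eval_zero, eval_restrictLine_update, eval_substZero]

theorem X_dvd_sub_substZero (i : σ) (f : MvPolynomial σ ℂ) : X i ∣ f - substZero i f := by
  rw [← Ideal.mem_span_singleton, ← Ideal.Quotient.eq]
  let π := Ideal.Quotient.mkₐ ℂ (Ideal.span {(X i : MvPolynomial σ ℂ)})
  suffices π.comp (substZero i) = π from (congrArg (· f) this).symm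
  ext j
  obtain rfl | hj := eq_or_ne j i <;> simp [π, substZero, *]

variable [Fintype σ]

theorem eval_update_monomial (z : σ → ℂ) (i : σ) (w : ℂ) (α : σ →₀ ℕ) (c : ℂ) :
    eval (Function.update z i w) (monomial α c) =
      c * (∏ j ∈ Finset.univ.erase i, z j ^ α j) * w ^ α i := by
  rw [eval_monomial, Finsupp.prod_fintype _ _ (fun _ => pow_zero _),
    ← Finset.prod_erase_mul _ _ (Finset.mem_univ i), Function.update_self, mul_assoc]
  congr 2
  refine Finset.prod_congr rfl fun j hj => ?_
  rw [Function.update_of_ne (Finset.ne_of_mem_erase hj)]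

theorem restrictLine_update_monomial (z : σ → ℂ) (i : σ) (α : σ →₀ ℕ) (c : ℂ) :
    restrictLine (Function.update z i 0) (Pi.single i 1) (monomial α c) =
      Polynomial.C (c * ∏ j ∈ Finset.univ.erase i, z j ^ α j) * Polynomial.X ^ α i :=
  Polynomial.funext fun w => by
    simp [eval_restrictLine_update, eval_update_monomial, Polynomial.eval_prod]

theorem eval_affinePart (z : σ → ℂ) (i : σ) (f : MvPolynomial σ ℂ) :
    eval z (affinePart i f) =
      (restrictLine (Function.update z i 0) (Pi.single i 1) f).coeff 0 +
        (restrictLine (Function.update z i 0) (Pi.single i 1) f).coeff 1 * z i := by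
  induction f using MvPolynomial.induction_on' with
  | monomial α c =>
    have heval := eval_update_monomial z i (z i) α c
    rw [Function.update_eq_self] at heval
    rw [affinePart_monomial, restrictLine_update_monomial, Polynomial.coeff_C_mul_X_pow,
      Polynomial.coeff_C_mul_X_pow]
    rcases Nat.lt_trichotomy (α i) 1 with h0 | h1 | h2
    · simp [Nat.lt_one_iff.mp h0, heval]
    · simp [h1, heval]
    · rw [if_neg (by omega), if_neg (by omega), if_neg (by omega)]
      simp
  | add f g hf hg =>
    simp only [affinePart_add, map_add, Polynomial.coeff_add, hf, hg]
    ring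

end Restriction

section Stability

variable {σ : Type*}

def IsRightHalfPlaneStable (f : MvPolynomial σ ℂ) : Prop :=
  ∀ z : σ → ℂ, (∀ i, 0 < (z i).re) → eval z f ≠ 0

theorem eq_zero_of_forall_re_pos_eval_eq_zero {f : MvPolynomial σ ℂ}
    (hf : ∀ z : σ → ℂ, (∀ i, 0 < (z i).re) → eval z f = 0) : f = 0 := by
  have hinf : ∀ _ : σ, {w : ℂ | 0 < w.re}.Infinite := fun _ =>
    ((Ioi_infinite 0).image Complex.ofReal_injective.injOn).mono
      (by rintro _ ⟨x, hx, rfl⟩; exact hx)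
  exact funext_set _ hinf fun z hz => by
    simpa using hf z fun i => mem_univ_pi.mp hz i

theorem isOpen_setOf_forall_re_pos [Finite σ] : IsOpen {z : σ → ℂ | ∀ i, 0 < (z i).re} := by
  simp only [ofPred_forall]
  exact isOpen_iInter_of_finite fun i => isOpen_lt continuous_const (by fun_prop)

theorem IsRightHalfPlaneStable.substZero_eq_zero_or [Finite σ] [DecidableEq σ]
    {f : MvPolynomial σ ℂ} (hf : IsRightHalfPlaneStable f) (i : σ) :
    substZero i f = 0 ∨ IsRightHalfPlaneStable (substZero i f) := by
  refine or_iff_not_imp_left.mpr fun hne z₀ hz₀ hzero => ?_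
  obtain ⟨z₁, -, hne₁⟩ :
      ∃ z₁ : σ → ℂ, (∀ j, 0 < (z₁ j).re) ∧ eval z₁ (substZero i f) ≠ 0 := by
    by_contra! h
    exact hne (eq_zero_of_forall_re_pos_eval_eq_zero h)
  set L : ℂ → σ → ℂ := fun t => z₀ + t • (z₁ - z₀)
  obtain ⟨r₀, hr₀, hball⟩ : ∃ r₀ > 0, ball (0 : ℂ) r₀ ⊆ L ⁻¹' {z | ∀ j, 0 < (z j).re} :=
    Metric.isOpen_iff.mp (isOpen_setOf_forall_re_pos.preimage (by fun_prop)) 0 (by simpa [L])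
  have hp : restrictLine z₀ (z₁ - z₀) (substZero i f) ≠ 0 := fun h => hne₁ <| by
    simpa [eval_restrictLine, L] using congrArg (Polynomial.eval 1) h
  obtain ⟨r, hr, hsphere⟩ := Polynomial.exists_sphere_eval_ne_zero hp hr₀
  set Ψ : ℝ → ℂ → ℂ := fun ε t => eval (Function.update (L t) i ε) f
  refine ne_zero_of_ne_zero_on_closedBall_of_ne_zero_on_sphere (Ψ := Ψ) ?_ ?_ hr.1 ?_ ?_ ?_
  · exact (continuous_eval f).comp (by fun_prop)
  · intro ε t
    have h : AnalyticAt ℂ (fun t => aeval (Function.update (L t) i (ε : ℂ)) f) t :=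
      AnalyticAt.aeval_mvPolynomial (fun j => by
        obtain rfl | hj := eq_or_ne j i
        · simpa using analyticAt_const
        · simpa [hj, L] using by fun_prop) f
    simpa [coe_aeval_eq_eval] using h.differentiableAt
  · intro ε hε t ht
    have hL := hball (closedBall_subset_ball hr.2 ht)
    refine hf _ fun j => ?_
    obtain rfl | hj := eq_or_ne j i
    · simpa using hε
    · simpa [hj] using hL j
  · intro t ht
    simpa [Ψ, ← eval_substZero, eval_restrictLine] using hsphere t ht
  · simpa [Ψ, L, eval_substZero] using hzero

theorem IsRightHalfPlaneStable.affinePart_eq_zero_or [Fintype σ] [DecidableEq σ]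
    {f : MvPolynomial σ ℂ} (hf : IsRightHalfPlaneStable f) (i : σ) :
    affinePart i f = 0 ∨ IsRightHalfPlaneStable (affinePart i f) := by
  rcases hf.substZero_eq_zero_or i with hf₀ | hf₀
  · obtain ⟨g, rfl⟩ : X i ∣ f := by simpa [hf₀] using X_dvd_sub_substZero i f
    have hg : IsRightHalfPlaneStable g := fun z hz h => hf z hz (by simp [h])
    have heval : ∀ z, eval z (affinePart i (X i * g)) = eval z (substZero i g) * z i := by
      intro z
      rw [eval_affinePart, map_mul, restrictLine_X, Polynomial.coeff_X_mul_zero,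
        Polynomial.coeff_X_mul, coeff_zero_restrictLine_update, zero_add]
    rcases hg.substZero_eq_zero_or i with hg₀ | hg₀
    · exact .inl <| eq_zero_of_forall_re_pos_eval_eq_zero fun z _ => by simp [heval, hg₀]
    · refine .inr fun z hz => ?_
      rw [heval]
      exact mul_ne_zero (hg₀ z hz) fun h => by simpa [h] using hz i
  · refine .inr fun z hz => ?_
    rw [eval_affinePart]
    refine Polynomial.coeff_zero_add_coeff_one_mul_ne_zero (fun w hw => ?_) ?_ (hz i)
    · rw [eval_restrictLine_update]
      exact hf _ <|
        (Function.forall_update_iff _ fun _ (v : ℂ) => 0 < v.re).mpr ⟨hw, fun j _ => hz j⟩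
    · rw [coeff_zero_restrictLine_update]
      exact hf₀ z hz

end Stability

end MvPolynomial

theorem coeff_MAP {n : ℕ} (f : MvPolynomial (Fin n) ℂ) (β : Fin n →₀ ℕ) :
    coeff β (MAP f) = if ∀ j, β j ≤ 1 then coeff β f else 0 :=
  coeff_sum_monomial_filter _ f β

theorem MAP_eq_foldr_affinePart {n : ℕ} (f : MvPolynomial (Fin n) ℂ) :
    MAP f = (List.finRange n).foldr affinePart f := by
  ext β
  simp [coeff_MAP, coeff_foldr_affinePart]

/-- The multi-affine part operator `MAP` preserves stability with respect to the open
right half-plane `ℍ_{π/2} = {ζ : Re ζ > 0}`. -/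
theorem MAP_preserves_right_halfplane_stability (n : ℕ) (f : MvPolynomial (Fin n) ℂ)
    (hf : ∀ z : Fin n → ℂ, (∀ i, 0 < (z i).re) → eval z f ≠ 0) :
    MAP f = 0 ∨ ∀ z : Fin n → ℂ, (∀ i, 0 < (z i).re) → eval z (MAP f) ≠ 0 := by
  rw [MAP_eq_foldr_affinePart]
  generalize List.finRange n = l
  induction l with
  | nil => exact .inr hf
  | cons i l ih =>
    rcases ih with h | h
    · exact .inl (by rw [List.foldr_cons, h, affinePart_zero])
    · exact IsRightHalfPlaneStable.affinePart_eq_zero_or h i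
end
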